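/- arXiv:1011.5351 — 2 statements merged into one kernel-verified Lean document; each statement's English description precedes it below -/
import Mathlib

section
/- Let r_1 ≥ ... ≥ r_m and c_1 ≥ ... ≥ c_n be monotone nonnegative integer sequences (not necessarily with c_1 = m, r_1 = n) that are consistent, and let α = (1/2)Σ_{i=1}^{max(m,c_1)} |r_i − b_i| with b_i = #{j : c_j ≥ i} (setting r_i = 0 for i > m). Then α ≤ mn/4. -/
/-!
Every column sum is at most `m`, so `max m (c 1) = m`, and counting `F` by rows and by columns
gives `∑ rᵢ = ∑ cⱼ = ∑_{i ≤ m} bᵢ`. Hence `dᵢ = rᵢ - bᵢ` sums to zero over `i ≤ m`, and since `r`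
and `b` are both antitone with values in `[0, n]`, any two entries satisfy `dᵢ - dⱼ ≤ n`.
A zero-sum family of `m` numbers whose spread is at most `a` has `2 ∑ |dᵢ| ≤ m a`.
-/

open Finset

/-- Number of points of `F` in row `i`. -/
def rowSum (F : Finset (ℤ × ℤ)) (i : ℤ) : ℕ := (F.filter fun p => p.1 = i).card

/-- Number of points of `F` in column `j`. -/
def colSum (F : Finset (ℤ × ℤ)) (j : ℤ) : ℕ := (F.filter fun p => p.2 = j).card

section LineSums

variable {F : Finset (ℤ × ℤ)} {A B : Finset ℤ}

theorem rowSum_le_card (hF : F ⊆ A ×ˢ B) (i : ℤ) : rowSum F i ≤ #B :=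
  card_le_card_of_injOn Prod.snd
    (fun _ hp => (mem_product.1 (hF (mem_filter.1 hp).1)).2)
    (fun _ hp _ hq h => Prod.ext ((mem_filter.1 hp).2.trans (mem_filter.1 hq).2.symm) h)

theorem colSum_le_card (hF : F ⊆ A ×ˢ B) (j : ℤ) : colSum F j ≤ #A :=
  card_le_card_of_injOn Prod.fst
    (fun _ hp => (mem_product.1 (hF (mem_filter.1 hp).1)).1)
    (fun _ hp _ hq h => Prod.ext h ((mem_filter.1 hp).2.trans (mem_filter.1 hq).2.symm))

theorem sum_rowSum (hF : F ⊆ A ×ˢ B) : ∑ i ∈ A, rowSum F i = #F :=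
  (card_eq_sum_card_fiberwise fun _ hp => (mem_product.1 (hF hp)).1).symm

theorem sum_colSum (hF : F ⊆ A ×ˢ B) : ∑ j ∈ B, colSum F j = #F :=
  (card_eq_sum_card_fiberwise fun _ hp => (mem_product.1 (hF hp)).2).symm

end LineSums

theorem sum_Icc_natCast {M : Type*} [AddCommMonoid M] (f : ℤ → M) (m : ℕ) :
    ∑ i ∈ Icc 1 m, f i = ∑ i ∈ Icc (1 : ℤ) m, f i :=
  sum_nbij (↑) (fun i hi => by simpa using hi) Nat.cast_injective.injOn
    (fun x hx => ⟨x.toNat, by simp at hx ⊢; omega⟩) fun _ _ => rfl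

section ZeroSum

variable {ι R : Type*}

theorem sum_filter_pos_eq_sum_posPart [AddCommGroup R] [LinearOrder R]
    [IsOrderedAddMonoid R] (s : Finset ι) (d : ι → R) :
    ∑ i ∈ s with 0 < d i, d i = ∑ i ∈ s, (d i)⁺ := by
  simp only [sum_filter, posPart_eq_ite_lt]

theorem sum_filter_neg_eq_sum_negPart [AddCommGroup R] [LinearOrder R]
    [IsOrderedAddMonoid R] (s : Finset ι) (d : ι → R) :
    ∑ i ∈ s with d i < 0, -d i = ∑ i ∈ s, (d i)⁻ := by
  simp only [sum_filter, negPart_eq_ite_lt]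

variable [CommRing R] [LinearOrder R] [IsStrictOrderedRing R]

theorem card_mul_sum_add_card_mul_sum_le {P Q : Finset ι} {d : ι → R} {a : R}
    (h : ∀ i ∈ P, ∀ j ∈ Q, d i - d j ≤ a) :
    (#Q : R) * ∑ i ∈ P, d i + #P * ∑ j ∈ Q, -d j ≤ #P * #Q * a := by
  have := sum_le_sum fun i hi => sum_le_sum fun j hj => h i hi j hj
  simp only [sum_sub_distrib, sum_const, nsmul_eq_mul] at this
  rw [← mul_sum] at this
  rw [sum_neg_distrib]
  linarith

/-- Pairing each positive entry with each negative one gives `(p + q) T ≤ p q a`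
for the common value `T` of the positive and negative mass; then `4 p q ≤ (p + q)²`. -/
theorem two_mul_sum_abs_le_card_mul {s : Finset ι} {d : ι → R} {a : R}
    (hsum : ∑ i ∈ s, d i = 0) (hspread : ∀ i ∈ s, ∀ j ∈ s, d i - d j ≤ a) :
    2 * ∑ i ∈ s, |d i| ≤ #s * a := by
  classical
  rcases s.eq_empty_or_nonempty with rfl | ⟨i₀, hi₀⟩
  · simp
  have ha : 0 ≤ a := by simpa using hspread i₀ hi₀ i₀ hi₀
  set P := {i ∈ s | 0 < d i}
  set Q := {i ∈ s | d i < 0}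
  set T := ∑ i ∈ s, (d i)⁺
  have hpos : ∑ i ∈ P, d i = T := sum_filter_pos_eq_sum_posPart s d
  have hneg : ∑ i ∈ s, (d i)⁻ = T := by
    have := sum_sub_distrib (s := s) (fun i => (d i)⁺) (fun i => (d i)⁻)
    simp only [posPart_sub_negPart, hsum] at this
    linarith
  have habs : ∑ i ∈ s, |d i| = 2 * T := by
    simp only [← posPart_add_negPart, sum_add_distrib, hneg]; ring
  have hpair : ((#P : R) + #Q) * T ≤ #P * #Q * a := by
    have := card_mul_sum_add_card_mul_sum_le (d := d) (a := a) (P := P) (Q := Q)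
      fun i hi j hj => hspread i (mem_of_mem_filter i hi) j (mem_of_mem_filter j hj)
    rw [hpos, sum_filter_neg_eq_sum_negPart, hneg] at this
    linarith
  have hcard : ((#P : R) + #Q) ≤ #s := by
    rw [← Nat.cast_add, ← card_union_of_disjoint (disjoint_filter.2 fun _ _ h => lt_asymm h)]
    exact_mod_cast card_le_card (union_subset (filter_subset _ _) (filter_subset _ _))
  rw [habs]
  rcases (#P + #Q).eq_zero_or_pos with hpq | hpq
  · have hT : T = 0 := by rw [← hpos, card_eq_zero.1 (by omega : #P = 0), sum_empty]
    rw [hT, mul_zero, mul_zero]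
    positivity
  · have hpq' : (0 : R) < #P + #Q := by exact_mod_cast hpq
    refine le_of_mul_le_mul_left ?_ hpq'
    nlinarith [sq_nonneg ((#P : R) - #Q), mul_le_mul_of_nonneg_right hcard (mul_nonneg hpq'.le ha)]

end ZeroSum

section Conjugate

variable {ι : Type*} (t : Finset ι) (c : ι → ℕ)

theorem antitone_card_filter_le : Antitone fun i => #{j ∈ t | i ≤ c j} :=
  fun _ _ h => card_le_card (monotone_filter_right _ fun _ _ hj => h.trans hj)

theorem sum_Icc_card_filter_le {m : ℕ} (h : ∀ j ∈ t, c j ≤ m) :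
    ∑ i ∈ Icc 1 m, #{j ∈ t | i ≤ c j} = ∑ j ∈ t, c j := by
  simp only [card_filter]
  rw [sum_comm]
  refine sum_congr rfl fun j hj => ?_
  rw [← card_filter, show {i ∈ Icc 1 m | i ≤ c j} = Icc 1 (c j) by
    ext i; simp only [mem_filter, mem_Icc]; have := h j hj; omega]
  simp

end Conjugate

theorem sub_sub_sub_le_of_antitoneOn {α : Type*} [LinearOrder α] {x y : α → ℕ} {s : Set α}
    {n : ℕ} (hx : AntitoneOn x s) (hy : Antitone y) (hxn : ∀ i ∈ s, x i ≤ n)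
    (hyn : ∀ i, y i ≤ n) {i j : α} (hi : i ∈ s) (hj : j ∈ s) :
    ((x i : ℤ) - y i) - (x j - y j) ≤ n := by
  rcases le_total i j with h | h
  · have := hy h; have := hxn i hi; omega
  · have := hx hj hi h; have := hyn j; omega

theorem alpha_le_general_general (m n : ℕ) (r c : ℕ → ℕ) (hn : 1 ≤ n)
    (hr : ∀ i i' : ℕ, 1 ≤ i → i ≤ i' → i' ≤ m → r i' ≤ r i)
    (hcons : ∃ F : Finset (ℤ × ℤ),
      F ⊆ Finset.Icc 1 (m : ℤ) ×ˢ Finset.Icc 1 (n : ℤ) ∧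
      (∀ i ∈ Finset.Icc 1 m, rowSum F i = r i) ∧
      (∀ j ∈ Finset.Icc 1 n, colSum F j = c j))
    (b : ℕ → ℕ)
    (hb : ∀ i : ℕ, b i = ((Finset.Icc 1 n).filter fun j => i ≤ c j).card) :
    2 * ∑ i ∈ Finset.Icc 1 (max m (c 1)), ((r i : ℤ) - b i).natAbs ≤ m * n := by
  obtain ⟨F, hF, hrow, hcol⟩ := hcons
  obtain rfl : b = fun i => #{j ∈ Icc 1 n | i ≤ c j} := funext hb
  have hcm : ∀ j ∈ Icc 1 n, c j ≤ m := fun j hj => by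
    simpa [hcol j hj] using colSum_le_card hF j
  have hrn : ∀ i ∈ Icc 1 m, r i ≤ n := fun i hi => by
    simpa [hrow i hi] using rowSum_le_card hF i
  have htotal : ∑ i ∈ Icc 1 m, r i = ∑ i ∈ Icc 1 m, #{j ∈ Icc 1 n | i ≤ c j} := by
    rw [sum_Icc_card_filter_le _ _ hcm, ← sum_congr rfl hrow, ← sum_congr rfl hcol,
      sum_Icc_natCast (rowSum F), sum_Icc_natCast (colSum F), sum_rowSum hF, sum_colSum hF]
  have key := two_mul_sum_abs_le_card_mul (s := Icc 1 m) (a := (n : ℤ))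
    (d := fun i => (r i : ℤ) - #{j ∈ Icc 1 n | i ≤ c j})
    (by rw [sum_sub_distrib, sub_eq_zero]; exact_mod_cast htotal)
    fun i hi j hj => sub_sub_sub_le_of_antitoneOn (s := Set.Icc 1 m)
      (fun i hi i' hi' h => hr i i' hi.1 h hi'.2) (antitone_card_filter_le _ c)
      (fun i hi => hrn i (mem_Icc.2 hi)) (fun _ => (card_filter_le _ _).trans (by simp))
      (mem_Icc.1 hi) (mem_Icc.1 hj)
  rw [max_eq_left (hcm 1 (mem_Icc.2 ⟨le_rfl, hn⟩))]
  zify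
  simpa using key

/-- For consistent monotone line sums (not necessarily normalized), the quantity
`α = (1/2) ∑_{i=1}^{max(m, c 1)} |rᵢ - bᵢ|` (with `rᵢ = 0` for `i > m`) satisfies
`α ≤ mn/4`, formalized as `2 ∑ |rᵢ - bᵢ| ≤ m * n`. -/
theorem alpha_le_general (m n : ℕ) (r c : ℕ → ℕ) (hm : 1 ≤ m) (hn : 1 ≤ n)
    (hr : ∀ i i' : ℕ, 1 ≤ i → i ≤ i' → i' ≤ m → r i' ≤ r i)
    (hc : ∀ j j' : ℕ, 1 ≤ j → j ≤ j' → j' ≤ n → c j' ≤ c j)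
    (hr0 : ∀ i : ℕ, m < i → r i = 0)
    (hcons : ∃ F : Finset (ℤ × ℤ),
      F ⊆ Finset.Icc 1 (m : ℤ) ×ˢ Finset.Icc 1 (n : ℤ) ∧
      (∀ i ∈ Finset.Icc 1 m, rowSum F i = r i) ∧
      (∀ j ∈ Finset.Icc 1 n, colSum F j = c j))
    (b : ℕ → ℕ)
    (hb : ∀ i : ℕ, b i = ((Finset.Icc 1 n).filter fun j => i ≤ c j).card) :
    2 * ∑ i ∈ Finset.Icc 1 (max m (c 1)), ((r i : ℤ) - b i).natAbs ≤ m * n :=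
  alpha_le_general_general m n r c hn hr hcons b hb
end

section
/- For m = n ≥ 2 and consistent line sums R = C = (n, 2, 2, ..., 2), every finite set F with these row and column sums satisfies L_h(F) ≥ 4n − 4 and L_v(F) ≥ 4n − 4, and there exists a set attaining both bounds. -/
/-!
The points counted by `Lh F` form the symmetric difference of `F` and its shift down by one
row, so `Lh F = 2 (#F - a)`, where `a` is the number of vertically adjacent pairs in `F`. The line sums force `#F = 3n - 2`,
a full first row and a full first column, and every other column `j` consists of `(1, j)` and
one further point; that column contains an adjacent pair only if the further point is `(2, j)`,
which happens for at most one `j` because row 2 already contains `(2, 1)`. So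
`a ≤ (n - 1) + 1` and `Lh F ≥ 4n - 4`. Row 1, column 1 and the diagonal together have exactly
`n` adjacent pairs, and `Lv` is `Lh` of the transposed set.
-/

open Finset

/-- Length of the horizontal boundary of `F`: the number of vertically adjacent pairs
of lattice points with exactly one of the two points in `F`. -/
def Lh (F : Finset (ℤ × ℤ)) : ℕ :=
  ((F ∪ F.image fun p => (p.1 - 1, p.2)).filter
    fun p => decide (p ∈ F) ≠ decide ((p.1 + 1, p.2) ∈ F)).card

/-- Length of the vertical boundary of `F`: the number of horizontally adjacent pairs
of lattice points with exactly one of the two points in `F`. -/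
def Lv (F : Finset (ℤ × ℤ)) : ℕ :=
  ((F ∪ F.image fun p => (p.1, p.2 - 1)).filter
    fun p => decide (p ∈ F) ≠ decide ((p.1, p.2 + 1) ∈ F)).card

def verticalPairs (F : Finset (ℤ × ℤ)) : Finset (ℤ × ℤ) :=
  F.filter fun p => (p.1 + 1, p.2) ∈ F

theorem mem_image_sub_one_fst {F : Finset (ℤ × ℤ)} {p : ℤ × ℤ} :
    p ∈ F.image (fun q => (q.1 - 1, q.2)) ↔ (p.1 + 1, p.2) ∈ F := by
  simp only [mem_image]
  exact ⟨by rintro ⟨q, hq, rfl⟩; simpa using hq, fun h => ⟨_, h, by simp⟩⟩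

theorem mem_image_sub_one_snd {F : Finset (ℤ × ℤ)} {p : ℤ × ℤ} :
    p ∈ F.image (fun q => (q.1, q.2 - 1)) ↔ (p.1, p.2 + 1) ∈ F := by
  simp only [mem_image]
  exact ⟨by rintro ⟨q, hq, rfl⟩; simpa using hq, fun h => ⟨_, h, by simp⟩⟩

theorem Lh_add_two_mul_card_verticalPairs (F : Finset (ℤ × ℤ)) :
    Lh F + 2 * #(verticalPairs F) = 2 * #F := by
  set B := F.image fun p => (p.1 - 1, p.2) with hB
  have hLh : Lh F = #((F \ B) ∪ (B \ F)) := by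
    unfold Lh
    congr 1
    ext p
    simp only [mem_filter, mem_union, mem_sdiff, hB, mem_image_sub_one_fst, ne_eq, decide_eq_decide]
    tauto
  have hpairs : verticalPairs F = F ∩ B := by
    ext p
    simp only [verticalPairs, hB, mem_filter, mem_inter, mem_image_sub_one_fst]
  have hcard : #B = #F := card_image_of_injective _ fun p q h => by
    simpa [Prod.ext_iff] using h
  have h1 := card_sdiff_add_card_inter F B
  have h2 := card_sdiff_add_card_inter B F
  rw [hLh, card_union_of_disjoint disjoint_sdiff_sdiff, hpairs, inter_comm B F] at *
  omega

theorem mem_image_swap {F : Finset (ℤ × ℤ)} {p : ℤ × ℤ} :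
    p ∈ F.image Prod.swap ↔ p.swap ∈ F := by
  rw [← mem_coe, coe_image, Set.image_swap_eq_preimage_swap]
  rfl

theorem rowSum_pos_of_mem {F : Finset (ℤ × ℤ)} {p : ℤ × ℤ} (hp : p ∈ F) : 0 < rowSum F p.1 :=
  card_pos.2 ⟨p, mem_filter.2 ⟨hp, rfl⟩⟩

theorem colSum_pos_of_mem {F : Finset (ℤ × ℤ)} {p : ℤ × ℤ} (hp : p ∈ F) : 0 < colSum F p.2 :=
  card_pos.2 ⟨p, mem_filter.2 ⟨hp, rfl⟩⟩

theorem rowSum_image_swap (F : Finset (ℤ × ℤ)) (i : ℤ) :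
    rowSum (F.image Prod.swap) i = colSum F i := by
  unfold rowSum colSum
  rw [filter_image, card_image_of_injective _ Prod.swap_injective]
  rfl

theorem colSum_image_swap (F : Finset (ℤ × ℤ)) (j : ℤ) :
    colSum (F.image Prod.swap) j = rowSum F j := by
  unfold rowSum colSum
  rw [filter_image, card_image_of_injective _ Prod.swap_injective]
  rfl

theorem Lv_eq_Lh_image_swap (F : Finset (ℤ × ℤ)) : Lv F = Lh (F.image Prod.swap) := by
  unfold Lv Lh
  rw [← card_image_of_injective _ Prod.swap_injective]
  congr 1
  ext p
  simp only [mem_image_swap, mem_filter, mem_union, mem_image_sub_one_fst, mem_image_sub_one_snd]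
  rfl

def lineSums (n : ℕ) (i : ℤ) : ℕ :=
  if i = 1 then n else if 1 ≤ i ∧ i ≤ (n : ℤ) then 2 else 0

theorem mem_Icc_of_lineSums_ne_zero {n : ℕ} {i : ℤ} (h : lineSums n i ≠ 0) :
    i ∈ Icc 1 (n : ℤ) := by
  unfold lineSums at h
  rw [mem_Icc]
  split_ifs at h <;> omega

theorem sum_lineSums {n : ℕ} (hn : 1 ≤ n) : ∑ i ∈ Icc 1 (n : ℤ), lineSums n i = 3 * n - 2 := by
  have h1 : (1 : ℤ) ∈ Icc 1 (n : ℤ) := mem_Icc.2 ⟨le_rfl, by omega⟩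
  rw [← add_sum_erase _ _ h1, sum_const_nat (m := 2), card_erase_of_mem h1, Int.card_Icc]
  · simp only [lineSums, if_true]
    omega
  · intro i hi
    obtain ⟨hi1, hi⟩ := mem_erase.1 hi
    simp only [lineSums, if_neg hi1, if_pos (mem_Icc.1 hi)]

section LineSums

variable {n : ℕ} {F : Finset (ℤ × ℤ)}

theorem fst_mem_Icc_of_rowSum (hR : ∀ i, rowSum F i = lineSums n i) {p : ℤ × ℤ} (hp : p ∈ F) :
    p.1 ∈ Icc 1 (n : ℤ) :=
  mem_Icc_of_lineSums_ne_zero <| hR p.1 ▸ (rowSum_pos_of_mem hp).ne'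

theorem snd_mem_Icc_of_colSum (hC : ∀ j, colSum F j = lineSums n j) {p : ℤ × ℤ} (hp : p ∈ F) :
    p.2 ∈ Icc 1 (n : ℤ) :=
  mem_Icc_of_lineSums_ne_zero <| hC p.2 ▸ (colSum_pos_of_mem hp).ne'

theorem one_mk_mem_of_lineSums (hR : ∀ i, rowSum F i = lineSums n i)
    (hC : ∀ j, colSum F j = lineSums n j) {j : ℤ} (hj : j ∈ Icc 1 (n : ℤ)) : (1, j) ∈ F := by
  have hsub : F.filter (·.1 = 1) ⊆ (Icc 1 (n : ℤ)).image (Prod.mk 1) := fun p hp => by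
    obtain ⟨hpF, hp1⟩ := mem_filter.1 hp
    exact mem_image.2 ⟨p.2, snd_mem_Icc_of_colSum hC hpF, by rw [← hp1]⟩
  have hrow : F.filter (·.1 = 1) = (Icc 1 (n : ℤ)).image (Prod.mk 1) := by
    refine eq_of_subset_of_card_le hsub ?_
    rw [card_image_of_injective _ (Prod.mk_right_injective 1), Int.card_Icc, ← rowSum, hR]
    simp [lineSums]
  exact (mem_filter.1 (hrow ▸ mem_image_of_mem _ hj)).1

theorem mk_one_mem_of_lineSums (hR : ∀ i, rowSum F i = lineSums n i)
    (hC : ∀ j, colSum F j = lineSums n j) {i : ℤ} (hi : i ∈ Icc 1 (n : ℤ)) : (i, 1) ∈ F :=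
  mem_image_swap.1 <| one_mk_mem_of_lineSums (fun i => (rowSum_image_swap F i).trans (hC i))
    (fun j => (colSum_image_swap F j).trans (hR j)) hi

theorem card_eq_of_rowSum (hn : 1 ≤ n) (hR : ∀ i, rowSum F i = lineSums n i) :
    #F = 3 * n - 2 :=
  calc #F = ∑ i ∈ Icc 1 (n : ℤ), rowSum F i :=
        card_eq_sum_card_fiberwise fun _ hp => fst_mem_Icc_of_rowSum hR hp
    _ = ∑ i ∈ Icc 1 (n : ℤ), lineSums n i := sum_congr rfl fun i _ => hR i
    _ = 3 * n - 2 := sum_lineSums hn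

theorem fst_eq_one_of_mem_verticalPairs (hR : ∀ i, rowSum F i = lineSums n i)
    (hC : ∀ j, colSum F j = lineSums n j) {p : ℤ × ℤ} (hp : p ∈ verticalPairs F)
    (hp2 : p.2 ≠ 1) : p.1 = 1 := by
  obtain ⟨hpF, hp'F⟩ := mem_filter.1 hp
  have hj := snd_mem_Icc_of_colSum hC hpF
  have hi := mem_Icc.1 (fst_mem_Icc_of_rowSum hR hpF)
  by_contra hp1
  have hcol : 2 < colSum F p.2 := two_lt_card.2
    ⟨(1, p.2), mem_filter.2 ⟨one_mk_mem_of_lineSums hR hC hj, rfl⟩,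
     p, mem_filter.2 ⟨hpF, rfl⟩, (p.1 + 1, p.2), mem_filter.2 ⟨hp'F, rfl⟩,
     by simp [Prod.ext_iff]; omega, by simp [Prod.ext_iff]; omega, by simp [Prod.ext_iff]⟩
  rw [mem_Icc] at hj
  rw [hC, lineSums, if_neg hp2, if_pos hj] at hcol
  omega

theorem card_filter_snd_eq_one_verticalPairs_le (hn : 1 ≤ n)
    (hR : ∀ i, rowSum F i = lineSums n i) (hC : ∀ j, colSum F j = lineSums n j) :
    #((verticalPairs F).filter (·.2 = 1)) ≤ n - 1 :=
  calc #((verticalPairs F).filter (·.2 = 1)) ≤ #((F.filter (·.2 = 1)).erase (n, 1)) := by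
        refine card_le_card fun p hp => ?_
        obtain ⟨hp, hp2⟩ := mem_filter.1 hp
        obtain ⟨hpF, hp'F⟩ := mem_filter.1 hp
        refine mem_erase.2 ⟨fun hpn => ?_, mem_filter.2 ⟨hpF, hp2⟩⟩
        have := mem_Icc.1 (fst_mem_Icc_of_rowSum hR hp'F)
        simp [hpn] at this
    _ = n - 1 := by
        have hn1 : ((n : ℤ), (1 : ℤ)) ∈ F.filter (·.2 = 1) :=
          mem_filter.2 ⟨mk_one_mem_of_lineSums hR hC (mem_Icc.2 ⟨by omega, le_rfl⟩), rfl⟩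
        rw [card_erase_of_mem hn1, ← colSum, hC]
        simp [lineSums]

theorem card_filter_snd_ne_one_verticalPairs_le (hn : 2 ≤ n)
    (hR : ∀ i, rowSum F i = lineSums n i) (hC : ∀ j, colSum F j = lineSums n j) :
    #((verticalPairs F).filter (¬ ·.2 = 1)) ≤ 1 :=
  calc #((verticalPairs F).filter (¬ ·.2 = 1)) ≤ #((F.filter (·.1 = 2)).erase (2, 1)) := by
        refine card_le_card_of_injOn (fun p => (p.1 + 1, p.2)) (fun p hp => ?_) ?_
        · obtain ⟨hp, hp2⟩ := mem_filter.1 hp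
          have hp1 := fst_eq_one_of_mem_verticalPairs hR hC hp hp2
          refine mem_erase.2 ⟨by simp [hp2], mem_filter.2 ⟨(mem_filter.1 hp).2, ?_⟩⟩
          simp only [hp1]
          norm_num
        · intro p _ q _ h
          simpa [Prod.ext_iff] using h
    _ = 1 := by
        have h21 : ((2 : ℤ), (1 : ℤ)) ∈ F.filter (·.1 = 2) :=
          mem_filter.2 ⟨mk_one_mem_of_lineSums hR hC (mem_Icc.2 ⟨by omega, by omega⟩), rfl⟩
        rw [card_erase_of_mem h21, ← rowSum, hR, lineSums, if_neg (by omega), if_pos (by omega)]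

theorem card_verticalPairs_le_of_lineSums (hn : 2 ≤ n) (hR : ∀ i, rowSum F i = lineSums n i)
    (hC : ∀ j, colSum F j = lineSums n j) : #(verticalPairs F) ≤ n := by
  have := card_filter_add_card_filter_not (s := verticalPairs F) (·.2 = 1)
  have := card_filter_snd_eq_one_verticalPairs_le (by omega) hR hC
  have := card_filter_snd_ne_one_verticalPairs_le hn hR hC
  omega

theorem le_Lh_of_lineSums (hn : 2 ≤ n) (hR : ∀ i, rowSum F i = lineSums n i)
    (hC : ∀ j, colSum F j = lineSums n j) : 4 * n - 4 ≤ Lh F := by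
  have := Lh_add_two_mul_card_verticalPairs F
  have := card_eq_of_rowSum (by omega) hR
  have := card_verticalPairs_le_of_lineSums hn hR hC
  omega

end LineSums

noncomputable def hookDiagonal (n : ℕ) : Finset (ℤ × ℤ) :=
  (Icc 1 (n : ℤ) ×ˢ Icc 1 (n : ℤ)).filter fun p => p.1 = 1 ∨ p.2 = 1 ∨ p.1 = p.2

theorem mem_hookDiagonal {n : ℕ} {p : ℤ × ℤ} : p ∈ hookDiagonal n ↔
    (1 ≤ p.1 ∧ p.1 ≤ n) ∧ (1 ≤ p.2 ∧ p.2 ≤ n) ∧ (p.1 = 1 ∨ p.2 = 1 ∨ p.1 = p.2) := by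
  simp only [hookDiagonal, mem_filter, mem_product, mem_Icc, and_assoc]

theorem image_swap_hookDiagonal (n : ℕ) : (hookDiagonal n).image Prod.swap = hookDiagonal n := by
  ext p
  simp only [mem_image_swap, mem_hookDiagonal, Prod.fst_swap, Prod.snd_swap]
  omega

theorem rowSum_hookDiagonal {n : ℕ} (hn : 2 ≤ n) (i : ℤ) :
    rowSum (hookDiagonal n) i = lineSums n i := by
  unfold rowSum lineSums
  split_ifs with h1 h2
  · have : (hookDiagonal n).filter (·.1 = i) = {1} ×ˢ Icc 1 (n : ℤ) := by
      ext p
      simp only [mem_filter, mem_hookDiagonal, mem_product, mem_singleton, mem_Icc]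
      omega
    rw [this, card_product, card_singleton, Int.card_Icc]
    omega
  · have : (hookDiagonal n).filter (·.1 = i) = {(i, 1), (i, i)} := by
      ext p
      simp only [mem_filter, mem_hookDiagonal, mem_insert, mem_singleton, Prod.ext_iff]
      omega
    rw [this, card_pair (by simp [Prod.ext_iff]; omega)]
  · refine card_eq_zero.2 (filter_eq_empty_iff.2 fun p hp => ?_)
    rw [mem_hookDiagonal] at hp
    omega

theorem colSum_hookDiagonal {n : ℕ} (hn : 2 ≤ n) (j : ℤ) :
    colSum (hookDiagonal n) j = lineSums n j := by
  rw [← image_swap_hookDiagonal, colSum_image_swap, rowSum_hookDiagonal hn]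

theorem le_card_verticalPairs_hookDiagonal {n : ℕ} (hn : 2 ≤ n) :
    n ≤ #(verticalPairs (hookDiagonal n)) :=
  calc n = #(insert (1, 2) ((Ico 1 (n : ℤ)).image fun i => (i, 1))) := by
        rw [card_insert_of_notMem (by simp), card_image_of_injective _ (Prod.mk_left_injective 1),
          Int.card_Ico]
        omega
    _ ≤ #(verticalPairs (hookDiagonal n)) := card_le_card fun p hp => by
        simp only [verticalPairs, mem_filter, mem_hookDiagonal]
        rcases mem_insert.1 hp with rfl | hp
        · omega
        · obtain ⟨i, hi, rfl⟩ := mem_image.1 hp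
          rw [mem_Ico] at hi
          omega

theorem Lh_hookDiagonal {n : ℕ} (hn : 2 ≤ n) : Lh (hookDiagonal n) = 4 * n - 4 := by
  refine le_antisymm ?_ (le_Lh_of_lineSums hn (rowSum_hookDiagonal hn) (colSum_hookDiagonal hn))
  have := Lh_add_two_mul_card_verticalPairs (hookDiagonal n)
  have := card_eq_of_rowSum (by omega) (rowSum_hookDiagonal hn)
  have := le_card_verticalPairs_hookDiagonal hn
  omega

/-- For `m = n ≥ 2` and line sums `R = C = (n, 2, 2, …, 2)`, every finite set with
these row and column sums has horizontal and vertical boundary lengths at least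
`4n - 4`, and there exists a set attaining both bounds. -/
theorem example_two_boundary (n : ℕ) (hn : 2 ≤ n) :
    (∀ F : Finset (ℤ × ℤ),
      (∀ i : ℤ, rowSum F i =
        if i = 1 then n else if 1 ≤ i ∧ i ≤ (n : ℤ) then 2 else 0) →
      (∀ j : ℤ, colSum F j =
        if j = 1 then n else if 1 ≤ j ∧ j ≤ (n : ℤ) then 2 else 0) →
      4 * n - 4 ≤ Lh F ∧ 4 * n - 4 ≤ Lv F) ∧
    ∃ F : Finset (ℤ × ℤ),
      (∀ i : ℤ, rowSum F i =
        if i = 1 then n else if 1 ≤ i ∧ i ≤ (n : ℤ) then 2 else 0) ∧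
      (∀ j : ℤ, colSum F j =
        if j = 1 then n else if 1 ≤ j ∧ j ≤ (n : ℤ) then 2 else 0) ∧
      Lh F = 4 * n - 4 ∧ Lv F = 4 * n - 4 := by
  refine ⟨fun F hR hC => ⟨le_Lh_of_lineSums hn hR hC, ?_⟩, hookDiagonal n,
    rowSum_hookDiagonal hn, colSum_hookDiagonal hn, Lh_hookDiagonal hn, ?_⟩
  · rw [Lv_eq_Lh_image_swap]
    exact le_Lh_of_lineSums hn (fun i => (rowSum_image_swap F i).trans (hC i))
      (fun j => (colSum_image_swap F j).trans (hR j))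
  · rw [Lv_eq_Lh_image_swap, image_swap_hookDiagonal, Lh_hookDiagonal hn]
end
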